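/- arXiv:math/0009221 — 3 statements merged into one kernel-verified Lean document; each statement's English description precedes it below -/
import Mathlib

section
/- Let A be a unital C*-algebra, let x ∈ A be invertible, and let w ∈ A be positive invertible with ‖w‖ < 1 and x x* = (1-w)^2 w⁻¹. Define a = (1+w)^{-1/2} w^{1/2}, b = (1+w)^{-1/2}, c = x⁻¹ (1+w)^{-1/2} w^{-1/2} (1-w), d = -x⁻¹ (1+w)^{-1/2} (1-w). Then a a* + b b* = 1 and c c* + d d* = 1. -/
/-!
All the elements involved except `x⁻¹` are functions of `w`, hence commute. With
`s = √w`, `t = √(1 + w)` and `m = 1 - w`, the first row is `(t⁻¹ s, t⁻¹)` and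
`a a* + b b* = t⁻¹ (s² + 1) t⁻¹ = 1`. Setting `g = s⁻¹ m`, the second row is
`x⁻¹ g (b, -a)`, so `c c* + d d* = x⁻¹ g (a a* + b b*) g* (x⁻¹)* = x⁻¹ (g g*) (x⁻¹)*`,
and `g g* = m² w⁻¹ = x x*`.
-/

open scoped Ring

theorem Commute.ringInverse_right {M₀ : Type*} [MonoidWithZero M₀] {a b : M₀}
    (h : Commute a b) : Commute a b⁻¹ʳ := by
  by_cases hb : IsUnit b
  · obtain ⟨u, rfl⟩ := hb
    rw [Ring.inverse_unit]
    exact h.units_inv_right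
  · rw [Ring.inverse_non_unit _ hb]
    exact Commute.zero_right a

theorem Commute.ringInverse_left {M₀ : Type*} [MonoidWithZero M₀] {a b : M₀}
    (h : Commute a b) : Commute a⁻¹ʳ b :=
  (h.symm.ringInverse_right).symm

theorem Commute.cfcSqrt_left {A : Type*} [CStarAlgebra A] [PartialOrder A] [StarOrderedRing A]
    {a b : A} (h : Commute a b) : Commute (CFC.sqrt a) b := by
  rw [CFC.sqrt_eq_cfc]
  exact h.cfc_nnreal _

theorem inverse_mul_mul_star_self_mul_star_inverse {M₀ : Type*} [MonoidWithZero M₀] [StarMul M₀]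
    {x : M₀} (hx : IsUnit x) : x⁻¹ʳ * (x * star x) * star x⁻¹ʳ = 1 := by
  rw [← mul_assoc, Ring.inverse_mul_cancel x hx, one_mul, ← star_mul,
    Ring.inverse_mul_cancel x hx, star_one]

theorem mul_mul_star_add_mul_mul_star {R : Type*} [NonUnitalSemiring R] [StarRing R]
    {a b g : R} (ha : Commute a g) (hb : Commute b g) :
    (a * g) * star (a * g) + (b * g) * star (b * g) = g * (a * star a + b * star b) * star g := by
  have key : ∀ {a : R}, Commute a g → (a * g) * star (a * g) = g * (a * star a) * star g :=
    fun {a} h => by rw [h.eq, star_mul, mul_assoc, mul_assoc, mul_assoc]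
  rw [key ha, key hb, mul_add, add_mul]

theorem inverse_mul_mul_star_add_inverse_mul_star_eq_one {R : Type*} [Ring R] [StarRing R]
    {s t : R} (hs : IsSelfAdjoint s) (ht : IsSelfAdjoint t) (htu : IsUnit t)
    (h : t * t = 1 + s * s) :
    (t⁻¹ʳ * s) * star (t⁻¹ʳ * s) + t⁻¹ʳ * star t⁻¹ʳ = 1 := by
  rw [star_mul, ht.ringInverse.star_eq, hs.star_eq]
  calc t⁻¹ʳ * s * (s * t⁻¹ʳ) + t⁻¹ʳ * t⁻¹ʳ = t⁻¹ʳ * (t * t) * t⁻¹ʳ := by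
        rw [h]; noncomm_ring
    _ = 1 := by
        rw [← mul_assoc, Ring.inverse_mul_cancel t htu, one_mul, Ring.mul_inverse_cancel t htu]

theorem inverse_mul_mul_star_inverse_mul {R : Type*} [Ring R] [StarRing R] {s m : R}
    (hs : IsSelfAdjoint s) (hm : IsSelfAdjoint m) (h : Commute s m) :
    (s⁻¹ʳ * m) * star (s⁻¹ʳ * m) = m ^ 2 * (s * s)⁻¹ʳ :=
  calc (s⁻¹ʳ * m) * star (s⁻¹ʳ * m) = s⁻¹ʳ * (m * m) * s⁻¹ʳ := by
        rw [star_mul, hm.star_eq, hs.ringInverse.star_eq]; simp only [mul_assoc]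
    _ = m ^ 2 * (s * s)⁻¹ʳ := by
        rw [((h.mul_right h).ringInverse_left).eq, mul_assoc, sq, Ring.mul_inverse_rev' (.refl s)]

theorem inverse_mul_mul_star_add_neg_inverse_mul_mul_star_eq_one {R : Type*} [Ring R]
    [StarRing R] {x a b g : R} (hx : IsUnit x) (ha : Commute a g) (hb : Commute b g)
    (hab : a * star a + b * star b = 1) (hg : g * star g = x * star x) :
    (x⁻¹ʳ * (b * g)) * star (x⁻¹ʳ * (b * g)) + (-(x⁻¹ʳ * (a * g))) * star (-(x⁻¹ʳ * (a * g))) =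
      1 :=
  calc _ = x⁻¹ʳ * ((a * g) * star (a * g) + (b * g) * star (b * g)) * star x⁻¹ʳ := by
        simp only [star_mul, star_neg, neg_mul_neg]; noncomm_ring
    _ = 1 := by
        rw [mul_mul_star_add_mul_mul_star ha hb, hab, mul_one, hg,
          inverse_mul_mul_star_self_mul_star_inverse hx]

theorem stmt_3_general {A : Type*} [CStarAlgebra A] [PartialOrder A] [StarOrderedRing A]
    (x w a b c d : A) (hx : IsUnit x) (hw0 : 0 ≤ w) (hw : IsUnit w)
    (hxx : x * star x = (1 - w)^2 * Ring.inverse w)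
    (ha : a = Ring.inverse (CFC.sqrt (1 + w)) * CFC.sqrt w)
    (hb : b = Ring.inverse (CFC.sqrt (1 + w)))
    (hc : c = Ring.inverse x * Ring.inverse (CFC.sqrt (1 + w)) * Ring.inverse (CFC.sqrt w) * (1 - w))
    (hd : d = -(Ring.inverse x * Ring.inverse (CFC.sqrt (1 + w)) * (1 - w))) :
    a * star a + b * star b = 1 ∧ c * star c + d * star d = 1 := by
  subst ha hb hc hd
  set s := CFC.sqrt w
  set t := CFC.sqrt (1 + w)
  set g := s⁻¹ʳ * (1 - w)
  have hs : s * s = w := CFC.sqrt_mul_sqrt_self w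
  have hs_sa : IsSelfAdjoint s := .of_nonneg (CFC.sqrt_nonneg w)
  have htu : IsUnit t := (isStrictlyPositive_one.add_nonneg hw0).isUnit_cfcSqrt
  have row : (t⁻¹ʳ * s) * star (t⁻¹ʳ * s) + t⁻¹ʳ * star t⁻¹ʳ = 1 :=
    inverse_mul_mul_star_add_inverse_mul_star_eq_one hs_sa (.of_nonneg (CFC.sqrt_nonneg _)) htu
      (by rw [hs]; exact CFC.sqrt_mul_sqrt_self (1 + w))
  have hsm : Commute s (1 - w) := ((Commute.one_right w).sub_right (.refl w)).cfcSqrt_left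
  have htw : Commute t w := ((Commute.one_left w).add_left (.refl w)).cfcSqrt_left
  have hts : Commute t s := htw.symm.cfcSqrt_left.symm
  have htg : Commute t⁻¹ʳ g :=
    hts.ringInverse_left.ringInverse_right.mul_right
      ((Commute.one_right t).sub_right htw).ringInverse_left
  have hag : Commute (t⁻¹ʳ * s) g := htg.mul_left ((Commute.refl s).ringInverse_right.mul_right hsm)
  have hgg : g * star g = x * star x := by
    rw [inverse_mul_mul_star_inverse_mul hs_sa ((IsSelfAdjoint.one A).sub (.of_nonneg hw0)) hsm,
      hs, hxx]
  have hc : x⁻¹ʳ * t⁻¹ʳ * s⁻¹ʳ * (1 - w) = x⁻¹ʳ * (t⁻¹ʳ * g) := by simp only [g, mul_assoc]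
  have hd : x⁻¹ʳ * t⁻¹ʳ * (1 - w) = x⁻¹ʳ * (t⁻¹ʳ * s * g) := by
    simp only [g, mul_assoc, Ring.mul_inverse_cancel_left s _ ((CFC.isUnit_sqrt_iff w).2 hw)]
  rw [hc, hd]
  exact ⟨row, inverse_mul_mul_star_add_neg_inverse_mul_mul_star_eq_one hx hag htg row hgg⟩

/-- Rows of the matrix `U` from Lemma 4 are normalized: `a a* + b b* = 1` and `c c* + d d* = 1`
. -/
theorem stmt_3 {A : Type*} [CStarAlgebra A] [PartialOrder A] [StarOrderedRing A]
    (x w a b c d : A) (hx : IsUnit x) (hw0 : 0 ≤ w) (hw : IsUnit w) (hwn : ‖w‖ < 1)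
    (hxx : x * star x = (1 - w)^2 * Ring.inverse w)
    (ha : a = Ring.inverse (CFC.sqrt (1 + w)) * CFC.sqrt w)
    (hb : b = Ring.inverse (CFC.sqrt (1 + w)))
    (hc : c = Ring.inverse x * Ring.inverse (CFC.sqrt (1 + w)) * Ring.inverse (CFC.sqrt w) * (1 - w))
    (hd : d = -(Ring.inverse x * Ring.inverse (CFC.sqrt (1 + w)) * (1 - w))) :
    a * star a + b * star b = 1 ∧ c * star c + d * star d = 1 :=
  stmt_3_general x w a b c d hx hw0 hw hxx ha hb hc hd
end

section
/- Let A be a unital C*-algebra, let x ∈ A be invertible, and let w ∈ A be positive invertible with ‖w‖ < 1 and x x* = (1-w)^2 w⁻¹. With a = (1+w)^{-1/2} w^{1/2}, b = (1+w)^{-1/2}, c = x⁻¹ (1+w)^{-1/2} w^{-1/2} (1-w), d = -x⁻¹ (1+w)^{-1/2} (1-w), the 2×2 matrix U = [[a, b],[c, d]] over A is unitary, i.e. U U* = I and U* U = I in M₂(A). -/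
/-!
Write `a = t⁻¹ s`, `b = t⁻¹` with `s = w^{1/2}`, `t = (1 + w)^{1/2}`, and `k = s⁻¹ (1 - w)`. Then
`U = diag(1, y) · [[a, b], [b, -a]]` with `y = x⁻¹ k`. The second factor is a self-adjoint
involution, since `a`, `b` are commuting self-adjoint elements with `a² + b² = t⁻² (w + 1) = 1`.
The first factor is unitary because `k` is self-adjoint with `k² = (1 - w)² w⁻¹ = x x*`, so that
`y y* = x⁻¹ (x x*) x*⁻¹ = 1`, and `y` is invertible since `k² = x x*` is. Beyond this, the only
input from C⋆-theory is that `s` and `t` are commuting self-adjoint invertible square roots.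
-/

open scoped Ring

theorem Commute.cfcSqrt_cfcSqrt {A : Type*} [CStarAlgebra A] [PartialOrder A] [StarOrderedRing A]
    {a b : A} (h : Commute a b) : Commute (CFC.sqrt a) (CFC.sqrt b) := by
  rw [CFC.sqrt_eq_cfc, CFC.sqrt_eq_cfc]
  exact ((h.cfc_nnreal _).symm.cfc_nnreal _).symm

namespace Unitary

theorem mem_of_isUnit_of_mul_star_self {R : Type*} [Monoid R] [StarMul R] {U : R}
    (hU : IsUnit U) (h : U * star U = 1) : U ∈ unitary R := by
  obtain ⟨u, rfl⟩ := hU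
  have hstar : star (u : R) = ↑u⁻¹ := (Units.mul_eq_one_iff_inv_eq.mp h).symm
  exact ⟨by rw [hstar, Units.inv_mul], h⟩

theorem diagonal_mem {n R : Type*} [Fintype n] [DecidableEq n] [Semiring R] [StarRing R]
    {d : n → R} (hd : ∀ i, d i ∈ unitary R) : Matrix.diagonal d ∈ unitary (Matrix n n R) := by
  simp only [mem_iff, Matrix.star_eq_conjTranspose, Matrix.diagonal_conjTranspose,
    Matrix.diagonal_mul_diagonal, Pi.star_apply, star_mul_self_of_mem (hd _),
    mul_star_self_of_mem (hd _)]
  exact ⟨Matrix.diagonal_one, Matrix.diagonal_one⟩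

variable {R : Type*} [Ring R] [StarRing R] {a b : R}

theorem ringInverse_mul_mem {x k : R} (hx : IsUnit x)
    (hk : IsSelfAdjoint k) (hxk : x * star x = k * k) : x⁻¹ʳ * k ∈ unitary R := by
  have hk_unit : IsUnit k := ((Commute.refl k).isUnit_mul_iff.mp (hxk ▸ hx.mul hx.star)).1
  refine mem_of_isUnit_of_mul_star_self (hx.ringInverse.mul hk_unit) ?_
  calc x⁻¹ʳ * k * star (x⁻¹ʳ * k) = x⁻¹ʳ * (k * k) * (star x)⁻¹ʳ := by
        rw [star_mul, hk.star_eq, ← Ring.inverse_star]; noncomm_ring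
    _ = 1 := by
        rw [← hxk, ← mul_assoc, Ring.inverse_mul_cancel x hx, one_mul,
          Ring.mul_inverse_cancel _ hx.star]

theorem reflection_mem (ha : IsSelfAdjoint a) (hb : IsSelfAdjoint b) (hab : Commute a b)
    (h : a * a + b * b = 1) : !![a, b; b, -a] ∈ unitary (Matrix (Fin 2) (Fin 2) R) := by
  have hself : star !![a, b; b, -a] = !![a, b; b, -a] := by
    ext i j
    fin_cases i <;> fin_cases j <;> simp [ha.star_eq, hb.star_eq]
  have hsq : !![a, b; b, -a] * !![a, b; b, -a] = 1 := by
    rw [Matrix.mul_fin_two, Matrix.one_fin_two, add_comm (b * b)]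
    simp [h, hab.eq]
  rw [mem_iff, hself]
  exact ⟨hsq, hsq⟩

theorem twist_reflection_mem {y : R} (ha : IsSelfAdjoint a) (hb : IsSelfAdjoint b)
    (hab : Commute a b) (h : a * a + b * b = 1) (hy : y ∈ unitary R) :
    !![a, b; y * b, -(y * a)] ∈ unitary (Matrix (Fin 2) (Fin 2) R) := by
  have hdiag : Matrix.diagonal ![1, y] ∈ unitary (Matrix (Fin 2) (Fin 2) R) :=
    diagonal_mem (by simp [Fin.forall_fin_two, hy])
  have hprod : !![a, b; y * b, -(y * a)] = Matrix.diagonal ![1, y] * !![a, b; b, -a] := by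
    rw [Matrix.diagonal_vec2, Matrix.mul_fin_two]
    simp
  rw [hprod]
  exact mul_mem hdiag (reflection_mem ha hb hab h)

theorem sqrt_block_mem {s t w x : R}
    (hs : IsSelfAdjoint s) (hs_unit : IsUnit s) (hsw : s * s = w)
    (ht : IsSelfAdjoint t) (ht_unit : IsUnit t) (htw : t * t = 1 + w) (hst : Commute s t)
    (hx : IsUnit x) (hxx : x * star x = (1 - w) ^ 2 * w⁻¹ʳ) :
    !![t⁻¹ʳ * s, t⁻¹ʳ; x⁻¹ʳ * t⁻¹ʳ * s⁻¹ʳ * (1 - w), -(x⁻¹ʳ * t⁻¹ʳ * (1 - w))] ∈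
      unitary (Matrix (Fin 2) (Fin 2) R) := by
  subst hsw
  set m := 1 - s * s
  set k := s⁻¹ʳ * m
  have hs_ti : Commute s t⁻¹ʳ := hst.ringInverse_right
  have hm_s : Commute m s := (Commute.one_left s).sub_left ((Commute.refl s).mul_left (.refl s))
  have hm_si : Commute m s⁻¹ʳ := hm_s.ringInverse_right
  have hti_k : Commute t⁻¹ʳ k :=
    hst.symm.ringInverse_ringInverse.mul_right
      ((Commute.one_right _).sub_right (hs_ti.symm.mul_right hs_ti.symm))
  have hm : IsSelfAdjoint m := .sub (.one R) (hs.commute_iff hs |>.mp (.refl s))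
  have hk : IsSelfAdjoint k := hs.ringInverse.commute_iff hm |>.mp hm_si.symm
  have hxk : x * star x = k * k := by
    rw [hxx, sq, Ring.mul_inverse_rev' (.refl s), ((hm_si.mul_left hm_si).mul_right (hm_si.mul_left hm_si)).eq]
    simp only [k, mul_assoc, ← mul_assoc m s⁻¹ʳ, hm_si.eq]
  have hab : t⁻¹ʳ * s * (t⁻¹ʳ * s) + t⁻¹ʳ * t⁻¹ʳ = 1 :=
    calc t⁻¹ʳ * s * (t⁻¹ʳ * s) + t⁻¹ʳ * t⁻¹ʳ = t⁻¹ʳ * t⁻¹ʳ * (1 + s * s) := by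
          rw [mul_assoc, ← mul_assoc s, hs_ti.eq]; noncomm_ring
      _ = 1 := by
          rw [← htw, ← mul_assoc, mul_assoc t⁻¹ʳ t⁻¹ʳ t, Ring.inverse_mul_cancel t ht_unit,
            mul_one, Ring.inverse_mul_cancel t ht_unit]
  have hc : x⁻¹ʳ * t⁻¹ʳ * s⁻¹ʳ * m = x⁻¹ʳ * k * t⁻¹ʳ := by
    rw [mul_assoc x⁻¹ʳ k, ← hti_k.eq]; noncomm_ring
  have hd : x⁻¹ʳ * t⁻¹ʳ * m = x⁻¹ʳ * k * (t⁻¹ʳ * s) := by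
    rw [mul_assoc x⁻¹ʳ k, ← mul_assoc k, ← hti_k.eq, mul_assoc t⁻¹ʳ, mul_assoc s⁻¹ʳ, hm_s.eq,
      ← mul_assoc s⁻¹ʳ, Ring.inverse_mul_cancel s hs_unit, one_mul, mul_assoc]
  rw [hc, hd]
  exact twist_reflection_mem (ht.ringInverse.commute_iff hs |>.mp hs_ti.symm)
    ht.ringInverse ((Commute.refl _).mul_left hs_ti) hab (ringInverse_mul_mem hx hk hxk)

end Unitary

theorem stmt_4_general {A : Type*} [CStarAlgebra A] [PartialOrder A] [StarOrderedRing A]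
    (x w a b c d : A) (hx : IsUnit x) (hw0 : 0 ≤ w) (hw : IsUnit w)
    (hxx : x * star x = (1 - w)^2 * Ring.inverse w)
    (ha : a = Ring.inverse (CFC.sqrt (1 + w)) * CFC.sqrt w)
    (hb : b = Ring.inverse (CFC.sqrt (1 + w)))
    (hc : c = Ring.inverse x * Ring.inverse (CFC.sqrt (1 + w)) * Ring.inverse (CFC.sqrt w) * (1 - w))
    (hd : d = -(Ring.inverse x * Ring.inverse (CFC.sqrt (1 + w)) * (1 - w))) :
    !![a, b; c, d] * star !![a, b; c, d] = 1 ∧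
    star !![a, b; c, d] * !![a, b; c, d] = 1 := by
  have h1w0 : 0 ≤ 1 + w := add_nonneg zero_le_one hw0
  have h1w : IsUnit (1 + w) := CStarAlgebra.isUnit_of_le 1 (le_add_of_nonneg_right hw0)
  have hU := Unitary.sqrt_block_mem (x := x)
    (IsSelfAdjoint.of_nonneg (CFC.sqrt_nonneg w)) ((CFC.isUnit_sqrt_iff w).mpr hw)
    (CFC.sqrt_mul_sqrt_self w) (IsSelfAdjoint.of_nonneg (CFC.sqrt_nonneg (1 + w)))
    ((CFC.isUnit_sqrt_iff (1 + w)).mpr h1w) (CFC.sqrt_mul_sqrt_self (1 + w))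
    ((Commute.one_left w).add_left (.refl w)).symm.cfcSqrt_cfcSqrt hx hxx
  subst ha hb hc hd
  exact ⟨Unitary.mul_star_self_of_mem hU, Unitary.star_mul_self_of_mem hU⟩

/-- The matrix `U = [[a,b],[c,d]]` from Lemma 4 is unitary in `M₂(A)`. -/
theorem stmt_4 {A : Type*} [CStarAlgebra A] [PartialOrder A] [StarOrderedRing A]
    (x w a b c d : A) (hx : IsUnit x) (hw0 : 0 ≤ w) (hw : IsUnit w) (hwn : ‖w‖ < 1)
    (hxx : x * star x = (1 - w)^2 * Ring.inverse w)
    (ha : a = Ring.inverse (CFC.sqrt (1 + w)) * CFC.sqrt w)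
    (hb : b = Ring.inverse (CFC.sqrt (1 + w)))
    (hc : c = Ring.inverse x * Ring.inverse (CFC.sqrt (1 + w)) * Ring.inverse (CFC.sqrt w) * (1 - w))
    (hd : d = -(Ring.inverse x * Ring.inverse (CFC.sqrt (1 + w)) * (1 - w))) :
    !![a, b; c, d] * star !![a, b; c, d] = 1 ∧
    star !![a, b; c, d] * !![a, b; c, d] = 1 :=
  stmt_4_general x w a b c d hx hw0 hw hxx ha hb hc hd
end

section
/- Let A be a unital C*-algebra and let x ∈ A be invertible. Then there exist a unitary U ∈ M₂(A) and elements y, z ∈ A such that U* [[2, x],[0, 0]] U = [[1, y],[z, 1]]. -/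
/-!
Polar decomposition writes the invertible `x` as `r * v` with `r = √(x x*)` self-adjoint and `v`
unitary, and conjugating by `diag(1, v*)` turns `[[2, x], [0, 0]]` into `[[2, r], [0, 0]]`. For a
real number `s`, conjugating `[[2, s], [0, 0]]` by the rotation through an angle `θ` gives diagonal
entries `1 ± (cos 2θ + (s/2) sin 2θ)`, so any `θ` with `cos 2θ + (s/2) sin 2θ = 0` works. Choosing
`θ` continuously in `s` and applying the continuous functional calculus of `r` yields commuting
self-adjoint `f, g` with `f² + g² = 1`, and the rotation `[[f, -g], [g, f]]` does the job for `r`.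
-/

open scoped Ring

-- Chosen so that `cos 2θ + (s/2) sin 2θ = 0` for `θ = rotationAngle s`.
open Real in
noncomputable def rotationAngle (s : ℝ) : ℝ := (arctan (s / 2) + π / 2) / 2

namespace Real

lemma cos_rotationAngle_mul (s : ℝ) :
    cos (rotationAngle s) * (2 * cos (rotationAngle s) + s * sin (rotationAngle s)) = 1 := by
  have h2 : 2 * rotationAngle s = arctan (s / 2) + π / 2 := by unfold rotationAngle; ring
  have hpos : 0 < √(1 + (s / 2) ^ 2) := by positivity
  calc _ = 1 + cos (2 * rotationAngle s) + s / 2 * sin (2 * rotationAngle s) := by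
        rw [cos_two_mul, sin_two_mul]; ring
    _ = 1 := by
        rw [h2, cos_add_pi_div_two, sin_add_pi_div_two, sin_arctan, cos_arctan]
        field_simp
        ring

lemma sin_rotationAngle_mul (s : ℝ) :
    sin (rotationAngle s) * (2 * sin (rotationAngle s) - s * cos (rotationAngle s)) = 1 := by
  linear_combination 2 * sin_sq_add_cos_sq (rotationAngle s) - cos_rotationAngle_mul s

end Real

namespace Matrix

variable {A : Type*}

lemma star_fin_two [Semiring A] [StarRing A] (a b c d : A) :
    star !![a, b; c, d] = !![star a, star c; star b, star d] := by
  ext i j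
  fin_cases i <;> fin_cases j <;> rfl

variable [Ring A] [StarRing A]

lemma diagonal_fin_two_mem_unitary {u : A} (hu : u ∈ unitary A) :
    !![1, 0; 0, u] ∈ unitary (Matrix (Fin 2) (Fin 2) A) := by
  simp [Unitary.mem_iff, star_fin_two, one_fin_two, hu]

lemma star_diagonal_fin_two_mul_mul (u a b : A) :
    star !![1, 0; 0, u] * !![a, b; 0, 0] * !![1, 0; 0, u] = !![a, b * u; 0, 0] := by
  rw [star_fin_two, mul_fin_two, mul_fin_two]
  simp

variable {f g : A}

lemma rotation_mem_unitary (hf : IsSelfAdjoint f) (hg : IsSelfAdjoint g) (hfg : Commute f g)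
    (h : f * f + g * g = 1) : !![f, -g; g, f] ∈ unitary (Matrix (Fin 2) (Fin 2) A) := by
  simp only [Unitary.mem_iff, star_fin_two, hf.star_eq, hg.star_eq, star_neg, mul_fin_two,
    one_fin_two, neg_mul, mul_neg, neg_neg, hfg.eq, add_comm (g * g), h, neg_add_cancel,
    add_neg_cancel, and_self]

lemma star_rotation_mul_mul_rotation (hf : IsSelfAdjoint f) (hg : IsSelfAdjoint g) (r : A) :
    star !![f, -g; g, f] * !![2, r; 0, 0] * !![f, -g; g, f] =
      !![f * (2 * f + r * g), f * (r * f - 2 * g); -(g * (2 * f + r * g)), g * (2 * g - r * f)] := by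
  simp only [star_fin_two, hf.star_eq, hg.star_eq, star_neg, mul_fin_two]
  noncomm_ring

end Matrix

open Matrix in
lemma IsSelfAdjoint.exists_mem_unitary_star_mul_mul_eq {A : Type*} [Ring A] [StarRing A]
    [TopologicalSpace A] [Algebra ℝ A] [ContinuousFunctionalCalculus ℝ A IsSelfAdjoint] {r : A}
    (hr : IsSelfAdjoint r) :
    ∃ U ∈ unitary (Matrix (Fin 2) (Fin 2) A), ∃ y z : A,
      star U * !![2, r; 0, 0] * U = !![1, y; z, 1] := by
  let φ := cfcHom (R := ℝ) hr
  let ι : C(spectrum ℝ r, ℝ) := (ContinuousMap.id ℝ).restrict (spectrum ℝ r)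
  let c : C(spectrum ℝ r, ℝ) :=
    ⟨fun s => Real.cos (rotationAngle s), by unfold rotationAngle; fun_prop⟩
  let d : C(spectrum ℝ r, ℝ) :=
    ⟨fun s => Real.sin (rotationAngle s), by unfold rotationAngle; fun_prop⟩
  have hφι : φ ι = r := cfcHom_id hr
  have hc : IsSelfAdjoint (φ c) := (IsSelfAdjoint.all c).map φ
  have hd : IsSelfAdjoint (φ d) := (IsSelfAdjoint.all d).map φ
  have hcd : φ c * φ c + φ d * φ d = 1 := by
    have : c * c + d * d = 1 := by
      ext s
      simp [c, d, ← sq]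
    simpa using congrArg φ this
  have h₁ : φ c * (2 * φ c + r * φ d) = 1 := by
    have : c * (2 * c + ι * d) = 1 := by
      ext s
      exact Real.cos_rotationAngle_mul s
    simpa [hφι, map_ofNat φ 2] using congrArg φ this
  have h₂ : φ d * (2 * φ d - r * φ c) = 1 := by
    have : d * (2 * d - ι * c) = 1 := by
      ext s
      exact Real.sin_rotationAngle_mul s
    simpa [hφι, map_ofNat φ 2] using congrArg φ this
  refine ⟨_, rotation_mem_unitary hc hd ((Commute.all c d).map φ) hcd, ?_⟩
  rw [star_rotation_mul_mul_rotation hc hd r, h₁, h₂]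
  exact ⟨_, _, rfl⟩

lemma IsUnit.exists_mem_unitary_eq_sqrt_mul {A : Type*} [CStarAlgebra A] [PartialOrder A]
    [StarOrderedRing A] {x : A} (hx : IsUnit x) :
    ∃ v ∈ unitary A, x = CFC.sqrt (x * star x) * v := by
  set r := CFC.sqrt (x * star x)
  have hr : IsUnit r := (CFC.isUnit_sqrt_iff _).mpr (hx.mul hx.star)
  have hrr : r * r = x * star x := CFC.sqrt_mul_sqrt_self _
  have hr_sa : IsSelfAdjoint r := (CFC.sqrt_nonneg _).isSelfAdjoint
  refine ⟨r⁻¹ʳ * x, ?_, by rw [← mul_assoc, Ring.mul_inverse_cancel _ hr, one_mul]⟩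
  rw [(hr.ringInverse.mul hx).mem_unitary_iff_mul_star_self, star_mul, hr_sa.ringInverse.star_eq]
  calc r⁻¹ʳ * x * (star x * r⁻¹ʳ) = r⁻¹ʳ * (r * r) * r⁻¹ʳ := by rw [hrr]; noncomm_ring
    _ = 1 := by rw [← mul_assoc, Ring.inverse_mul_cancel _ hr, one_mul, Ring.mul_inverse_cancel _ hr]

open Matrix in
/-- For an invertible `x` in a unital C*-algebra `A`, there exist a unitary `U ∈ M₂(A)` and
elements `y, z ∈ A` with `U* [[2,x],[0,0]] U = [[1,y],[z,1]]`. -/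
theorem stmt_6 {A : Type*} [CStarAlgebra A] (x : A) (hx : IsUnit x) :
    ∃ U : Matrix (Fin 2) (Fin 2) A, ∃ y z : A,
      U * star U = 1 ∧ star U * U = 1 ∧
      star U * !![(2 : A), x; 0, 0] * U = !![1, y; z, 1] := by
  let := CStarAlgebra.spectralOrder A
  have := CStarAlgebra.spectralOrderedRing A
  obtain ⟨v, hv, hxv⟩ := hx.exists_mem_unitary_eq_sqrt_mul
  have hx_star_v : x * star v = CFC.sqrt (x * star x) := by
    nth_rw 1 [hxv]
    rw [mul_assoc, Unitary.mul_star_self_of_mem hv, mul_one]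
  obtain ⟨R, hR, y, z, hRyz⟩ :=
    (CFC.sqrt_nonneg (x * star x)).isSelfAdjoint.exists_mem_unitary_star_mul_mul_eq
  let D : Matrix (Fin 2) (Fin 2) A := !![1, 0; 0, star v]
  have hDR : D * R ∈ unitary _ :=
    mul_mem (diagonal_fin_two_mem_unitary (Unitary.star_mem hv)) hR
  refine ⟨D * R, y, z, Unitary.mul_star_self_of_mem hDR, Unitary.star_mul_self_of_mem hDR, ?_⟩
  calc star (D * R) * !![2, x; 0, 0] * (D * R)
      = star R * (star D * !![2, x; 0, 0] * D) * R := by simp only [star_mul, mul_assoc]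
    _ = !![1, y; z, 1] := by rw [star_diagonal_fin_two_mul_mul, hx_star_v, hRyz]
end
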